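/- arXiv:2401.01863 — 13 statements merged into one kernel-verified Lean document; each statement's English description precedes it below -/
import Mathlib

section
/- In a crossed semi-bimodule, for all b,c ∈ A and y,z ∈ K one has (b∘y)(c∘z) = (bc)∘((ᵇz)(y^{c∘z})). -/
/-- A crossed semi-bimodule: monoids `A`, `K`, a right `K`-action `c` on the set `A`,
a left `A`-monoid action `l` on `K`, a right `A`-monoid action `r` on `K`,
satisfying the four axioms of Definition 3.1. -/
structure CrossedSemiBimodule (A K : Type*) [Monoid A] [Monoid K] where
  c : A → K → A
  l : A → K → K
  r : K → A → K
  c_one : ∀ a, c a 1 = a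
  c_mul : ∀ a x y, c a (x * y) = c (c a x) y
  l_one : ∀ x, l 1 x = x
  l_mul : ∀ a b x, l (a * b) x = l a (l b x)
  l_map_one : ∀ a, l a (1 : K) = 1
  l_map_mul : ∀ a x y, l a (x * y) = l a x * l a y
  r_one : ∀ x, r x 1 = x
  r_mul : ∀ x a b, r x (a * b) = r (r x a) b
  r_map_one : ∀ a, r (1 : K) a = 1
  r_map_mul : ∀ a x y, r (x * y) a = r x a * r y a
  compat : ∀ a b x, r (l a x) b = l a (r x b)
  ax2 : ∀ a b x, c (a * b) (l a x) = a * c b x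
  ax3 : ∀ a b x, c (a * b) (r x b) = c a x * b
  ax4 : ∀ a b x y, l a y * r x (c b y) = r x b * l (c a x) y
/-- `(b∘y)(c∘z) = (bc)∘((ᵇz)(y^{c∘z}))`. -/
theorem stmt1 {A K : Type*} [Monoid A] [Monoid K] (S : CrossedSemiBimodule A K)
    (b c : A) (y z : K) :
    S.c b y * S.c c z = S.c (b * c) (S.l b z * S.r y (S.c c z)) := by
  rw [S.c_mul, S.ax2, S.ax3]
end

section
/- Let (K,A,∘) be a crossed semi-bimodule and A⋈K the monoid on A × K with (a,x)•(b,y) = (ab, (ᵃy)(x^{b∘y})). Then the map d¹₁ : A⋈K → A given by d¹₁(a,x) = a∘x is a monoid homomorphism. -/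
/-- `d¹₁(a,x) = a∘x` is a monoid homomorphism from `A⋈K` to `A`. -/
theorem stmt3 {A K : Type*} [Monoid A] [Monoid K] (S : CrossedSemiBimodule A K) :
    S.c 1 (1 : K) = 1 ∧
    ∀ a b : A, ∀ x y : K,
      S.c (a * b) (S.l a y * S.r x (S.c b y)) = S.c a x * S.c b y := by
  refine ⟨S.c_one 1, fun a b x y => ?_⟩
  rw [S.c_mul, S.ax2, S.ax3]
end

section
/- Let (K,A,∘) be a crossed semi-bimodule, with monoids A⋈K on A × K and A⋈K⋈K on A × K × K as defined. Then the map d²₁(a,x,y) = (a, xy) from A⋈K⋈K to A⋈K is a monoid homomorphism. -/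
set_option maxRecDepth 10000 in
/-- `d²₁(a,x,y) = (a, xy)` is a monoid homomorphism `A⋈K⋈K → A⋈K`. -/
theorem stmt5 {A K : Type*} [Monoid A] [Monoid K] (S : CrossedSemiBimodule A K)
    (mAK : Monoid (A × K))
    (hmul : ∀ p q : A × K, p * q = (p.1 * q.1, S.l p.1 q.2 * S.r p.2 (S.c q.1 q.2)))
    (hone : (1 : A × K) = (1, 1))
    (mAKK : Monoid (A × K × K))
    (hmul2 : ∀ p q : A × K × K, p * q =
        (p.1 * q.1,
         S.l p.1 q.2.1 * S.r p.2.1 (S.c q.1 q.2.1),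
         S.l (S.c p.1 q.2.1) q.2.2 * S.r p.2.2 (S.c (S.c q.1 q.2.1) q.2.2)))
    (hone2 : (1 : A × K × K) = (1, 1, 1)) :
    ∃ f : (A × K × K) →* (A × K), ∀ p : A × K × K, f p = (p.1, p.2.1 * p.2.2) := by
  have key : ∀ (a : A) (u v : K), S.l (S.c a u) v = S.l a v := by
    intro a u v
    have h := mul_assoc ((a, 1, 1) : A × K × K) (1, u, 1) (1, 1, v)
    rw [hmul2, hmul2, hmul2, hmul2] at h
    have hc11 : S.c (1:A) (1:K) = 1 := S.c_one 1
    simp only [hc11, S.c_one, S.l_one, S.l_map_one, S.r_one, S.r_map_one,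
      mul_one, one_mul] at h
    exact (congrArg (fun p : A × K × K => p.2.2) h).symm
  refine ⟨{ toFun := fun p => (p.1, p.2.1 * p.2.2), map_one' := ?_, map_mul' := ?_ }, fun p => rfl⟩
  · rw [hone2, hone]; exact Prod.ext rfl (one_mul 1)
  · rintro ⟨a, x, y⟩ ⟨b, u, v⟩
    simp only [hmul2, hmul]
    refine Prod.ext rfl ?_
    simp only
    symm
    have hc11 : S.c (1:A) (1:K) = 1 := S.c_one 1
    rw [S.l_map_mul, S.r_map_mul, S.c_mul]
    have hax : S.l a v * S.r x (S.c (S.c b u) v) = S.r x (S.c b u) * S.l (S.c a x) v :=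
      S.ax4 a (S.c b u) x v
    rw [key a x v] at hax
    calc S.l a u * S.l a v * (S.r x (S.c (S.c b u) v) * S.r y (S.c (S.c b u) v))
        = S.l a u * (S.l a v * S.r x (S.c (S.c b u) v)) * S.r y (S.c (S.c b u) v) := by
          simp [mul_assoc]
      _ = S.l a u * (S.r x (S.c b u) * S.l a v) * S.r y (S.c (S.c b u) v) := by rw [hax]
      _ = S.l a u * S.r x (S.c b u) * (S.l (S.c a u) v * S.r y (S.c (S.c b u) v)) := by
          rw [key a u v]; simp [mul_assoc]
end

section
/- Let (K,A,∘) be a crossed semi-bimodule, and define ∂(y) = 1∘y. The operation x ⋄ y := y·x^{∂(y)} makes the underlying set of K into a monoid K^{tw} with unit 1. -/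
/-- The operation `x ⋄ y := y·x^{∂(y)}`, with `∂(y) = 1∘y`, makes `K` into a
monoid with unit `1`. -/
theorem stmt7 {A K : Type*} [Monoid A] [Monoid K] (S : CrossedSemiBimodule A K) :
    (∀ x y z : K,
      (fun u v : K => v * S.r u (S.c 1 v))
        ((fun u v : K => v * S.r u (S.c 1 v)) x y) z
      = (fun u v : K => v * S.r u (S.c 1 v)) x
        ((fun u v : K => v * S.r u (S.c 1 v)) y z)) ∧
    (∀ x : K, (fun u v : K => v * S.r u (S.c 1 v)) 1 x = x) ∧
    (∀ x : K, (fun u v : K => v * S.r u (S.c 1 v)) x 1 = x) := by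
  refine ⟨?_, ?_, ?_⟩
  · intro x y z
    simp only []
    have key : S.c 1 (z * S.r y (S.c 1 z)) = S.c 1 y * S.c 1 z := by
      rw [S.c_mul]
      calc S.c (S.c 1 z) (S.r y (S.c 1 z))
          = S.c (1 * S.c 1 z) (S.r y (S.c 1 z)) := by rw [one_mul]
        _ = S.c 1 y * S.c 1 z := S.ax3 1 (S.c 1 z) y
    rw [key, S.r_map_mul, ← mul_assoc, ← S.r_mul]
  · intro x
    simp only [S.r_map_one, mul_one]
  · intro x
    simp only [S.c_one, S.r_one, one_mul]
end

section
/- Let ∂ : K → A be a crossed semi-module. Defining ᵃx = x and a∘x = a·∂(x) (together with the given right action x^a) yields a crossed semi-bimodule structure on (K, A). -/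
/-- A crossed semi-module `∂ : K → A` yields a crossed semi-bimodule with
`ᵃx = x` and `a∘x = a·∂(x)`. -/
theorem stmt8 {A K : Type*} [Monoid A] [Monoid K] (d : K →* A) (r : K → A → K)
    (r_one : ∀ x, r x 1 = x)
    (r_mul : ∀ x a b, r x (a * b) = r (r x a) b)
    (r_map_one : ∀ a, r (1 : K) a = 1)
    (r_map_mul : ∀ a x y, r (x * y) a = r x a * r y a)
    (hi : ∀ a x, a * d (r x a) = d x * a)
    (hii : ∀ x y, y * r x (d y) = x * y) :
    ∃ S : CrossedSemiBimodule A K,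
      S.c = (fun a x => a * d x) ∧ S.l = (fun _ x => x) ∧ S.r = r := by
  refine ⟨{ c := fun a x => a * d x, l := fun _ x => x, r := r
            c_one := by simp
            c_mul := by intros; simp [mul_assoc]
            l_one := fun _ => rfl
            l_mul := fun _ _ _ => rfl
            l_map_one := fun _ => rfl
            l_map_mul := fun _ _ _ => rfl
            r_one := r_one
            r_mul := r_mul
            r_map_one := r_map_one
            r_map_mul := r_map_mul
            compat := fun _ _ _ => rfl
            ax2 := by intros; simp [mul_assoc]
            ax3 := by intro a b x; simp [mul_assoc, hi]
            ax4 := by intro a b x y; simp only [r_mul, hii] }, rfl, rfl, rfl⟩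
end

section
/- Let (K,A,∘) be a crossed semi-bimodule for which ᵃx = x for all a ∈ A, x ∈ K. Then: a∘x = a·∂(x) for all a,x, where ∂(x) = 1∘x; ∂ is a monoid homomorphism; a·∂(x^a) = ∂(x)·a; and y·x^{∂(y)} = x·y. Hence (K, A, ∂, ρ) is a crossed semi-module. -/
/-- If `ᵃx = x` for all `a, x`, then with `∂(x) = 1∘x` one has
`a∘x = a·∂(x)`, `∂` is a monoid homomorphism, `a·∂(x^a) = ∂(x)·a`, and
`y·x^{∂(y)} = x·y`; i.e. `(K, A, ∂, ρ)` is a crossed semi-module. -/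
theorem stmt9 {A K : Type*} [Monoid A] [Monoid K] (S : CrossedSemiBimodule A K)
    (h : ∀ a x, S.l a x = x) :
    (∀ a x, S.c a x = a * S.c 1 x) ∧
    (S.c 1 (1 : K) = 1) ∧
    (∀ x y : K, S.c 1 (x * y) = S.c 1 x * S.c 1 y) ∧
    (∀ a x, a * S.c 1 (S.r x a) = S.c 1 x * a) ∧
    (∀ x y : K, y * S.r x (S.c 1 y) = x * y) := by
  have key : ∀ a x, S.c a x = a * S.c 1 x := by
    intro a x
    have := S.ax2 a 1 x
    rwa [mul_one, h] at this
  refine ⟨key, S.c_one 1, ?_, ?_, ?_⟩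
  · intro x y
    rw [S.c_mul, key]
  · intro a x
    have := S.ax3 1 a x
    rw [one_mul, key] at this
    exact this
  · intro x y
    have := S.ax4 1 1 x y
    rwa [h, h, S.r_one] at this
end

section
/- Let (K,A,∘) be a crossed semi-bimodule with K and A groups, and ∂(y) = 1∘y. Then for all x,z ∈ K: ∂(x·z^{∂(x)}) = ∂(z)·∂(x). -/
/-- When `K` and `A` are groups, `∂(x·z^{∂(x)}) = ∂(z)·∂(x)`. -/
theorem stmt12 {A K : Type*} [Group A] [Group K] (S : CrossedSemiBimodule A K)
    (x z : K) :
    S.c 1 (x * S.r z (S.c 1 x)) = S.c 1 z * S.c 1 x := by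
  have := S.ax3 1 (S.c 1 x) z
  rw [one_mul] at this
  rw [S.c_mul, this]
end

section
/- Let (K,A,∘) be a crossed semi-bimodule with K and A groups. Then the map ∂ : K^{tw} → A, ∂(y) = 1∘y, is a monoid homomorphism from the monoid K^{tw} (with operation x ⋄ y = y·x^{∂(y)}) to A. -/
/-- When `K` and `A` are groups, `∂ : K^{tw} → A` is a monoid homomorphism,
where `K^{tw}` carries the operation `x ⋄ y = y·x^{∂(y)}`. -/
theorem stmt13 {A K : Type*} [Group A] [Group K] (S : CrossedSemiBimodule A K) :
    S.c 1 (1 : K) = 1 ∧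
    ∀ x y : K, S.c 1 (y * S.r x (S.c 1 y)) = S.c 1 x * S.c 1 y := by
  refine ⟨S.c_one 1, fun x y => ?_⟩
  rw [S.c_mul]
  have h := S.ax3 1 (S.c 1 y) x
  rwa [one_mul] at h
end

section
/- Let (K,A,∘) be a crossed semi-bimodule with K and A groups. Then the monoid K^{tw} with operation x ⋄ y = y·x^{∂(y)} is a group: for each x ∈ K, the element x^♭ := ^{∂(x)⁻¹}(x⁻¹) satisfies x ⋄ x^♭ = 1 and x^♭ ⋄ x = 1. -/
/-- When `K` and `A` are groups, `K^{tw}` is a group: with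
`x^♭ := ^{∂(x)⁻¹}(x⁻¹)` one has `x ⋄ x^♭ = 1` and `x^♭ ⋄ x = 1`. -/
theorem stmt14 {A K : Type*} [Group A] [Group K] (S : CrossedSemiBimodule A K)
    (x : K) :
    (S.l (S.c 1 x)⁻¹ x⁻¹) * S.r x (S.c 1 (S.l (S.c 1 x)⁻¹ x⁻¹)) = 1 ∧
    x * S.r (S.l (S.c 1 x)⁻¹ x⁻¹) (S.c 1 x) = 1 := by
  set a := S.c 1 x with ha
  have hinv : ∀ z, S.l a (S.l a⁻¹ z) = z := fun z => by
    rw [← S.l_mul, mul_inv_cancel, S.l_one]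
  have hda : S.c 1 (S.l a⁻¹ x⁻¹) = a⁻¹ := by
    have h1 : S.c a x⁻¹ = 1 := by
      have h := S.c_mul 1 x x⁻¹
      rw [mul_inv_cancel, S.c_one] at h
      exact h.symm
    have h2 := S.ax2 a⁻¹ a x⁻¹
    rw [inv_mul_cancel, h1, mul_one] at h2
    exact h2
  constructor
  · have h := S.ax4 1 1 x (S.l a⁻¹ x⁻¹)
    rw [S.l_one, S.r_one, ← ha] at h
    rw [h, hinv, mul_inv_cancel]
  · have h := S.ax4 1 1 (S.l a⁻¹ x⁻¹) x
    rw [S.l_one, S.r_one, ← ha] at h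
    rw [h, hda, ← S.l_map_mul, inv_mul_cancel, S.l_map_one]
end

section
/- Let (K,A,∘) be a crossed semi-bimodule with K and A groups. Define x^{*a} = ^{a⁻¹}(x^a) and x ⋄ y = y·x^{∂(y)}, where ∂(y) = 1∘y. Then for all x,y ∈ K: y ⋄ x^{*∂(y)} = x ⋄ y. -/
/-- With `x^{*a} = ^{a⁻¹}(x^a)` and `x ⋄ y = y·x^{∂(y)}`, one has
`y ⋄ x^{*∂(y)} = x ⋄ y`. -/
theorem stmt15 {A K : Type*} [Group A] [Group K] (S : CrossedSemiBimodule A K)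
    (x y : K) :
    (S.l (S.c 1 y)⁻¹ (S.r x (S.c 1 y))) *
      S.r y (S.c 1 (S.l (S.c 1 y)⁻¹ (S.r x (S.c 1 y)))) =
    y * S.r x (S.c 1 y) := by
  set d := S.c 1 y with hd
  set e := S.c 1 x with he
  have hx' : S.l d⁻¹ (S.r x d) = S.r (S.l d⁻¹ x) d := (S.compat _ _ _).symm
  have hc1 : S.c 1 (S.l d⁻¹ (S.r x d)) = d⁻¹ * (e * d) := by
    rw [hx']
    have h1 := S.ax3 d⁻¹ d (S.l d⁻¹ x)
    rw [inv_mul_cancel] at h1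
    have h2 := S.ax2 d⁻¹ 1 x
    rw [mul_one] at h2
    rw [h1, h2, ← he, mul_assoc]
  have hy : y = S.r (S.r y d⁻¹) d := by
    rw [← S.r_mul, inv_mul_cancel, S.r_one]
  have hkey : S.l d⁻¹ x * S.r (S.r y d⁻¹) e = S.r y d⁻¹ * x := by
    have h4 := S.ax4 d⁻¹ 1 (S.r y d⁻¹) x
    have h3 : S.c d⁻¹ (S.r y d⁻¹) = 1 := by
      have h5 := S.ax3 1 d⁻¹ y
      rw [one_mul] at h5
      rw [h5, ← hd, mul_inv_cancel]
    rw [h3, S.l_one, S.r_one, ← he] at h4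
    exact h4
  rw [hc1, hx', S.r_mul, S.r_mul, ← S.r_map_mul, hkey, S.r_map_mul, ← hy]
end

section
/- Let (K,A,∘) be a crossed semi-bimodule with K and A groups. Define the action x^{*a} = ^{a⁻¹}(x^a) on K^{tw} (K with operation x ⋄ y = y·x^{∂(y)}). Then for all a ∈ A, (x ⋄ y)^{*a} = (x^{*a}) ⋄ (y^{*a}), i.e. the action of A on K^{tw} is by monoid endomorphisms. -/
/-- With `x^{*a} = ^{a⁻¹}(x^a)`, one has `(x ⋄ y)^{*a} = x^{*a} ⋄ y^{*a}`,
so `A` acts on `K^{tw}` by monoid endomorphisms. -/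
theorem stmt16 {A K : Type*} [Group A] [Group K] (S : CrossedSemiBimodule A K)
    (a : A) (x y : K) :
    S.l a⁻¹ (S.r (y * S.r x (S.c 1 y)) a) =
      (S.l a⁻¹ (S.r y a)) *
        S.r (S.l a⁻¹ (S.r x a)) (S.c 1 (S.l a⁻¹ (S.r y a))) := by
  have h2 := S.ax2 a⁻¹ a (S.r y a)
  have h3 := S.ax3 1 a y
  simp only [inv_mul_cancel, one_mul] at h2 h3
  have key : S.c 1 y * a = a * S.c 1 (S.l a⁻¹ (S.r y a)) := by
    rw [h2, h3]; group
  rw [S.r_map_mul, S.l_map_mul, S.compat, ← S.r_mul, ← S.r_mul, key]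
end

section
/- Let (K,A,∘) be a crossed semi-bimodule with K and A groups. Then (K^{tw}, A, ∂) with the action x^{*a} = ^{a⁻¹}(x^a) is a crossed module: ∂ : K^{tw} → A is a group homomorphism, A acts on the group K^{tw} on the right by automorphisms, ∂(x^{*a}) = a⁻¹·∂(x)·a, and y^{*∂(x)} equals the conjugate x^♭ ⋄ y ⋄ x in K^{tw} (where x^♭ is the ⋄-inverse of x). -/
section Aux

variable {A K : Type*} [Group A] [Group K] (S : CrossedSemiBimodule A K)

lemma csb_l_inv (a : A) (x : K) : S.l a x⁻¹ = (S.l a x)⁻¹ := by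
  have h : S.l a x⁻¹ * S.l a x = 1 := by
    rw [← S.l_map_mul, inv_mul_cancel, S.l_map_one]
  exact eq_inv_of_mul_eq_one_left h

lemma csb_r_inv (x : K) (a : A) : S.r x⁻¹ a = (S.r x a)⁻¹ := by
  have h : S.r x⁻¹ a * S.r x a = 1 := by
    rw [← S.r_map_mul, inv_mul_cancel, S.r_map_one]
  exact eq_inv_of_mul_eq_one_left h

/-- `c 1 (l a⁻¹ z) = a⁻¹ * c a z`. -/
lemma csb_c_l (a : A) (z : K) : S.c 1 (S.l a⁻¹ z) = a⁻¹ * S.c a z := by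
  have := S.ax2 a⁻¹ a z
  rwa [inv_mul_cancel] at this

/-- `c a (r x a) = c 1 x * a`. -/
lemma csb_c_r (x : K) (a : A) : S.c a (S.r x a) = S.c 1 x * a := by
  have := S.ax3 1 a x
  rwa [one_mul] at this

/-- `∂(x^{*a}) = a⁻¹ ∂x a`. -/
lemma csb_del_star (x : K) (a : A) :
    S.c 1 (S.l a⁻¹ (S.r x a)) = a⁻¹ * S.c 1 x * a := by
  rw [csb_c_l, csb_c_r, mul_assoc]

/-- `c (∂x) x⁻¹ = 1`. -/
lemma csb_c_inv (x : K) : S.c (S.c 1 x) x⁻¹ = 1 := by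
  have h := S.c_mul 1 x x⁻¹
  rw [mul_inv_cancel, S.c_one] at h; exact h.symm

/-- `∂(flat x) = (∂x)⁻¹`. -/
lemma csb_del_flat (x : K) : S.c 1 (S.l (S.c 1 x)⁻¹ x⁻¹) = (S.c 1 x)⁻¹ := by
  rw [csb_c_l, csb_c_inv, mul_one]

/-- from ax4 with a = b = 1 : `y * r x (∂y) = x * l (∂x) y`. -/
lemma csb_key (x y : K) : y * S.r x (S.c 1 y) = x * S.l (S.c 1 x) y := by
  have h := S.ax4 1 1 x y
  rwa [S.l_one, S.r_one] at h

/-- `r x (∂x) = l (∂x) x`. -/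
lemma csb_rx (x : K) : S.r x (S.c 1 x) = S.l (S.c 1 x) x := by
  have h := csb_key S x x
  exact mul_left_cancel h

/-- `r (flat x) (∂x) = x⁻¹`. -/
lemma csb_r_flat (x : K) : S.r (S.l (S.c 1 x)⁻¹ x⁻¹) (S.c 1 x) = x⁻¹ := by
  rw [S.compat, csb_r_inv, csb_rx, ← csb_l_inv, ← S.l_mul, inv_mul_cancel, S.l_one]

end Aux

/-- `(K^{tw}, A, ∂)` with `x^{*a} = ^{a⁻¹}(x^a)` is a crossed module. -/
theorem stmt17 {A K : Type*} [Group A] [Group K] (S : CrossedSemiBimodule A K) :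
    -- notation: diamond x y = y·x^{∂y}, star x a = ^{a⁻¹}(x^a), flat x = ⋄-inverse of x
    (∀ dia : K → K → K, ∀ star : K → A → K, ∀ flat : K → K,
      (dia = fun x y => y * S.r x (S.c 1 y)) →
      (star = fun x a => S.l a⁻¹ (S.r x a)) →
      (flat = fun x => S.l (S.c 1 x)⁻¹ x⁻¹) →
      -- ∂ is a homomorphism K^{tw} → A
      (S.c 1 (1 : K) = 1) ∧
      (∀ x y : K, S.c 1 (dia x y) = S.c 1 x * S.c 1 y) ∧
      -- A acts on the right on K^{tw} by automorphisms
      (∀ x, star x 1 = x) ∧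
      (∀ x a b, star x (a * b) = star (star x a) b) ∧
      (∀ a, star (1 : K) a = 1) ∧
      (∀ a x y, star (dia x y) a = dia (star x a) (star y a)) ∧
      (∀ a : A, Function.Bijective (fun x => star x a)) ∧
      -- the two crossed-module identities
      (∀ a x, S.c 1 (star x a) = a⁻¹ * S.c 1 x * a) ∧
      (∀ x y : K, star y (S.c 1 x) = dia (dia (flat x) y) x)) := by
  intro dia star flat hd hs hf
  subst hd hs hf
  have star_one : ∀ x : K, S.l (1:A)⁻¹ (S.r x 1) = x := by
    intro x; rw [S.r_one, inv_one, S.l_one]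
  have star_mul : ∀ (x : K) (a b : A),
      S.l (a*b)⁻¹ (S.r x (a*b)) = S.l b⁻¹ (S.r (S.l a⁻¹ (S.r x a)) b) := by
    intro x a b
    rw [S.compat, mul_inv_rev, S.l_mul, S.r_mul]
  refine ⟨S.c_one 1, ?_, star_one, star_mul, ?_, ?_, ?_, ?_, ?_⟩
  · -- ∂ homomorphism
    intro x y
    simp only
    rw [S.c_mul]
    exact csb_c_r S x (S.c 1 y)
  · -- star 1 a = 1
    intro a; simp only [S.r_map_one, S.l_map_one]
  · -- equivariance
    intro a x y
    simp only
    rw [S.r_map_mul, S.l_map_mul]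
    congr 1
    rw [csb_del_star, S.compat, ← S.r_mul, ← S.r_mul]
    congr 2
    group
  · -- bijectivity
    intro a
    refine ⟨Function.LeftInverse.injective (g := fun x => S.l (a⁻¹)⁻¹ (S.r x a⁻¹)) ?_,
      Function.RightInverse.surjective (g := fun x => S.l (a⁻¹)⁻¹ (S.r x a⁻¹)) ?_⟩ <;>
      intro x <;> simp only <;> rw [← star_mul]
    · rw [mul_inv_cancel, star_one]
    · rw [inv_mul_cancel, star_one]
  · -- ∂(star x a) = a⁻¹ ∂x a
    intro a x
    exact csb_del_star S x a
  · -- Peiffer identity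
    intro x y
    simp only
    rw [S.r_map_mul, ← S.r_mul]
    have h := S.ax4 1 (S.c 1 x) (S.l (S.c 1 x)⁻¹ x⁻¹) (S.r y (S.c 1 x))
    rw [S.l_one, csb_c_r, csb_del_flat, csb_r_flat] at h
    rw [h, ← mul_assoc, mul_inv_cancel, one_mul]
end

section
/- Let R be a commutative ring and p,q ∈ R with pq + 2 = 0. For m = [a,b] ∈ 𝒜(R) = R × R and k = (r,s) (representing the matrix with rows (1,r),(0,s)) in the monoid 𝒦(R) (with product (r,s)(r₁,s₁) = (r₁ + r·s₁, s·s₁)), define m∘k = [as − pr, s²b − qrsa − r²]. Then ∘ is a right action of the monoid 𝒦(R) on the set 𝒜(R): m∘1 = m and (m∘k)∘k₁ = m∘(k·k₁). -/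
/-- For a commutative ring `R` and `p, q ∈ R` with `pq + 2 = 0`, the map
`[a,b]∘(r,s) = [as − pr, s²b − qrsa − r²]` is a right action of the monoid
`𝒦(R)` (pairs `(r,s)` with product `(r,s)(r₁,s₁) = (r₁ + r·s₁, s·s₁)`,
unit `(0,1)`) on the set `𝒜(R) = R × R`. -/
theorem stmt19 {R : Type*} [CommRing R] (p q : R) (hpq : p * q + 2 = 0)
    (act : (R × R) → (R × R) → (R × R))
    (hact : ∀ m k : R × R, act m k =
      (m.1 * k.2 - p * k.1,
       k.2 ^ 2 * m.2 - q * k.1 * k.2 * m.1 - k.1 ^ 2)) :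
    (∀ m : R × R, act m (0, 1) = m) ∧
    (∀ m k k₁ : R × R, act (act m k) k₁ = act m (k₁.1 + k.1 * k₁.2, k.2 * k₁.2)) := by
  constructor
  · intro m; simp [hact]
  · intro m k k₁
    simp only [hact, Prod.mk.injEq]
    constructor
    · ring
    · linear_combination (k₁.2 * k.1 * k₁.1) * hpq
end
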